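/- arXiv:1404.0598 — 2 statements merged into one kernel-verified Lean document; each statement's English description precedes it below -/
import Mathlib

section
/- Let N ≥ 1 and n ≥ 1 be integers. Let A be an N×N matrix over ℂ((t)) with A.coeff m = 0 for all m < −n. Let g be an N×N matrix over ℂ((t)) which is invertible and such that all entries of both g and g⁻¹ have vanishing coefficients in all negative degrees (i.e. g lies in GL_N(ℂ[[t]])). Set g₀ = g.coeff 0 and let B = g·A·g⁻¹ − g′·g⁻¹ be the gauge transform. Then B.coeff m = 0 for all m < −n, the matrix g₀ is invertible with inverse (g⁻¹).coeff 0, and B.coeff(−n) = g₀ · (A.coeff(−n)) · g₀⁻¹. In particular, gauge transformation by GL_N(ℂ[[t]]) preserves the order of singularity and conjugates (hence preserves non-nilpotence of) the polar part. -/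
open scoped Classical

/-- The formal derivative of a formal Laurent series: `f′.coeff m = (m+1) • f.coeff (m+1)`. -/
noncomputable def lderiv (f : LaurentSeries ℂ) : LaurentSeries ℂ where
  coeff m := ((m + 1 : ℤ) : ℂ) * f.coeff (m + 1)
  isPWO_support' := by
    have h : (Function.support fun m : ℤ => ((m + 1 : ℤ) : ℂ) * f.coeff (m + 1)) ⊆
        (fun m : ℤ => m - 1) '' f.support := by
      intro m hm
      have : f.coeff (m + 1) ≠ 0 := by
        intro h0
        apply hm
        simp [Function.mem_support, h0]
      exact ⟨m + 1, this, by ring⟩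
    exact (f.isPWO_support.image_of_monotone fun a b hab => by omega).mono h

/-- The matrix of `m`-th coefficients of a matrix of Laurent series. -/
noncomputable def mcoeff {N : ℕ} (A : Matrix (Fin N) (Fin N) (LaurentSeries ℂ)) (m : ℤ) :
    Matrix (Fin N) (Fin N) ℂ :=
  Matrix.of fun i j => (A i j).coeff m

/-- Entrywise formal derivative of a matrix of Laurent series. -/
noncomputable def mderiv {N : ℕ} (A : Matrix (Fin N) (Fin N) (LaurentSeries ℂ)) :
    Matrix (Fin N) (Fin N) (LaurentSeries ℂ) :=
  A.map lderiv


lemma coeff_mul_eq_zero {f g : LaurentSeries ℂ} {a b : ℤ}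
    (hf : ∀ m < a, f.coeff m = 0) (hg : ∀ m < b, g.coeff m = 0) :
    ∀ m < a + b, (f * g).coeff m = 0 := by
  intro m hm
  rw [HahnSeries.coeff_mul]
  apply Finset.sum_eq_zero
  rintro ⟨p, q⟩ hpq
  rw [Finset.mem_addAntidiagonal] at hpq
  obtain ⟨h1, h2, h3⟩ := hpq
  by_cases hp : p < a
  · simp [hf p hp]
  · have : q < b := by omega
    simp [hg q this]

lemma coeff_mul_boundary {f g : LaurentSeries ℂ} {a b : ℤ}
    (hf : ∀ m < a, f.coeff m = 0) (hg : ∀ m < b, g.coeff m = 0) :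
    (f * g).coeff (a + b) = f.coeff a * g.coeff b := by
  rw [HahnSeries.coeff_mul]
  apply Finset.sum_eq_single (a, b)
  · rintro ⟨p, q⟩ hpq hne
    rw [Finset.mem_addAntidiagonal] at hpq
    obtain ⟨h1, h2, h3⟩ := hpq
    have hp : ¬ p < a := fun h => h1 (hf p h)
    have hq : ¬ q < b := fun h => h2 (hg q h)
    exact absurd (by ext <;> simp <;> omega : (p, q) = (a, b)) hne
  · intro h
    rw [Finset.mem_addAntidiagonal] at h
    push_neg at h
    by_cases ha : f.coeff a = 0
    · simp [ha]
    · have := h ha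
      by_cases hb : g.coeff b = 0
      · simp [hb]
      · exact absurd rfl (this hb)

lemma mcoeff_apply {N : ℕ} (A : Matrix (Fin N) (Fin N) (LaurentSeries ℂ)) (m : ℤ) (i j : Fin N) :
    mcoeff A m i j = (A i j).coeff m := rfl

lemma mcoeff_entry_eq_zero {N : ℕ} {A : Matrix (Fin N) (Fin N) (LaurentSeries ℂ)} {m : ℤ}
    (h : mcoeff A m = 0) (i j : Fin N) : (A i j).coeff m = 0 := by
  have := congrFun (congrFun h i) j
  simpa [mcoeff_apply] using this

lemma coeff_sum {α : Type*} (s : Finset α) (f : α → LaurentSeries ℂ) (m : ℤ) :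
    (∑ k ∈ s, f k).coeff m = ∑ k ∈ s, (f k).coeff m :=
  map_sum (HahnSeries.coeff.addMonoidHom m) f s

lemma mcoeff_mul_eq_zero {N : ℕ} {X Y : Matrix (Fin N) (Fin N) (LaurentSeries ℂ)} {a b : ℤ}
    (hX : ∀ m < a, mcoeff X m = 0) (hY : ∀ m < b, mcoeff Y m = 0) :
    ∀ m < a + b, mcoeff (X * Y) m = 0 := by
  intro m hm
  ext i j
  simp only [mcoeff_apply, Matrix.zero_apply, Matrix.mul_apply, coeff_sum]
  apply Finset.sum_eq_zero
  intro k _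
  exact coeff_mul_eq_zero (fun p hp => mcoeff_entry_eq_zero (hX p hp) i k)
    (fun p hp => mcoeff_entry_eq_zero (hY p hp) k j) m hm

lemma mcoeff_mul_boundary {N : ℕ} {X Y : Matrix (Fin N) (Fin N) (LaurentSeries ℂ)} {a b : ℤ}
    (hX : ∀ m < a, mcoeff X m = 0) (hY : ∀ m < b, mcoeff Y m = 0) :
    mcoeff (X * Y) (a + b) = mcoeff X a * mcoeff Y b := by
  ext i j
  simp only [mcoeff_apply, Matrix.mul_apply, coeff_sum]
  apply Finset.sum_congr rfl
  intro k _
  exact coeff_mul_boundary (fun p hp => mcoeff_entry_eq_zero (hX p hp) i k)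
    (fun p hp => mcoeff_entry_eq_zero (hY p hp) k j)

lemma mcoeff_sub {N : ℕ} (X Y : Matrix (Fin N) (Fin N) (LaurentSeries ℂ)) (m : ℤ) :
    mcoeff (X - Y) m = mcoeff X m - mcoeff Y m := by
  ext i j
  simp [mcoeff_apply, Matrix.sub_apply, HahnSeries.coeff_sub]

lemma mcoeff_one_zero {N : ℕ} :
    mcoeff (1 : Matrix (Fin N) (Fin N) (LaurentSeries ℂ)) 0 = 1 := by
  ext i j
  by_cases h : i = j <;> simp [mcoeff_apply, Matrix.one_apply, h]

/-- Gauge transformation by an element of `GL_N(ℂ[[t]])` preserves the order of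
singularity and conjugates the polar part by the constant term `g₀ = g.coeff 0`,
whose inverse is `(g⁻¹).coeff 0`. -/
theorem gauge_by_integral_loop_group
    (N : ℕ) (hN : 1 ≤ N) (n : ℤ) (hn : 1 ≤ n)
    (A : Matrix (Fin N) (Fin N) (LaurentSeries ℂ))
    (hA : ∀ m : ℤ, m < -n → mcoeff A m = 0)
    (g : Matrix (Fin N) (Fin N) (LaurentSeries ℂ)) (hg : IsUnit g)
    (hgint : ∀ m : ℤ, m < 0 → mcoeff g m = 0)
    (hginvint : ∀ m : ℤ, m < 0 → mcoeff g⁻¹ m = 0)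
    (B : Matrix (Fin N) (Fin N) (LaurentSeries ℂ))
    (hB : B = g * A * g⁻¹ - (mderiv g) * g⁻¹) :
    (∀ m : ℤ, m < -n → mcoeff B m = 0) ∧
    (mcoeff g 0) * (mcoeff g⁻¹ 0) = 1 ∧
    (mcoeff g⁻¹ 0) * (mcoeff g 0) = 1 ∧
    mcoeff B (-n) = (mcoeff g 0) * (mcoeff A (-n)) * (mcoeff g⁻¹ 0) := by
  have hdet := (Matrix.isUnit_iff_isUnit_det g).mp hg
  have hmul : g * g⁻¹ = 1 := Matrix.mul_nonsing_inv g hdet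
  have hmul' : g⁻¹ * g = 1 := Matrix.nonsing_inv_mul g hdet
  have hder : ∀ m : ℤ, m < (0 : ℤ) → mcoeff (mderiv g) m = 0 := by
    intro m hm
    ext i j
    simp only [mcoeff_apply, mderiv, Matrix.map_apply, Matrix.zero_apply]
    show ((m + 1 : ℤ) : ℂ) * (g i j).coeff (m + 1) = 0
    by_cases h1 : m + 1 = 0
    · simp [h1]
    · have h2 : m + 1 < 0 := by omega
      rw [mcoeff_entry_eq_zero (hgint _ h2) i j, mul_zero]
  have hc1 : mcoeff g 0 * mcoeff g⁻¹ 0 = 1 := by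
    have h := mcoeff_mul_boundary hgint hginvint
    rw [hmul, show (0 : ℤ) + 0 = 0 from rfl, mcoeff_one_zero] at h
    exact h.symm
  have hc2 : mcoeff g⁻¹ 0 * mcoeff g 0 = 1 := by
    have h := mcoeff_mul_boundary hginvint hgint
    rw [hmul', show (0 : ℤ) + 0 = 0 from rfl, mcoeff_one_zero] at h
    exact h.symm
  have hgA : ∀ m : ℤ, m < -n → mcoeff (g * A) m = 0 := fun m hm =>
    mcoeff_mul_eq_zero hgint hA m (by omega)
  have hgAg : ∀ m : ℤ, m < -n → mcoeff (g * A * g⁻¹) m = 0 := fun m hm =>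
    mcoeff_mul_eq_zero hgA hginvint m (by omega)
  have hdg : ∀ m : ℤ, m < (0 : ℤ) → mcoeff (mderiv g * g⁻¹) m = 0 := fun m hm =>
    mcoeff_mul_eq_zero hder hginvint m (by omega)
  have hgAb : mcoeff (g * A) (-n) = mcoeff g 0 * mcoeff A (-n) := by
    have h := mcoeff_mul_boundary hgint hA
    rwa [zero_add] at h
  have hgAgb : mcoeff (g * A * g⁻¹) (-n) = mcoeff g 0 * mcoeff A (-n) * mcoeff g⁻¹ 0 := by
    have h := mcoeff_mul_boundary hgA hginvint
    rwa [add_zero, hgAb] at h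
  refine ⟨?_, hc1, hc2, ?_⟩
  · intro m hm
    rw [hB, mcoeff_sub, hgAg m hm, hdg m (by omega), sub_zero]
  · rw [hB, mcoeff_sub, hdg (-n) (by omega), sub_zero, hgAgb]
end

section
/- Let N ≥ 1 and let n, ñ ≥ 2 be integers. Let A and Ã be N×N matrices over ℂ((t)) such that: A.coeff m = 0 for all m < −n and A.coeff(−n) is non-nilpotent; Ã.coeff m = 0 for all m < −ñ and Ã.coeff(−ñ) is non-nilpotent (i.e. both operators ∂_t + A and ∂_t + Ã are in reduced form). If there exists an invertible N×N matrix g over ℂ((t)) with Ã = g·A·g⁻¹ − g′·g⁻¹, then n = ñ. In other words, two gauge-equivalent reduced operators have the same order of singularity; this is the key claim in the proof that the slope of a connection is well defined (Lemma 2.4 of the paper, in the GL_N case). -/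
open scoped Classical

/-!
Let `∇ = ∂_t + A` act on matrices by `X ↦ X′ + A X`. When `A` vanishes below `t^(-n)` with
`n ≥ 2`, differentiation only lowers orders by one, so `∇^k 1` vanishes below `t^(-n k)` and its
coefficient there is `A_{-n}^k`, which is nonzero because `A_{-n}` is not nilpotent. A gauge
transformation `g` intertwines `∇` with `∇̃ = ∂_t + Ã`, hence `∇^k 1 = g⁻¹ ∇̃^k g`, whose
coefficients vanish below `-ñ k + O(1)`. Letting `k → ∞` gives `n ≤ ñ`, and `ñ ≤ n` by symmetry.
-/

open HahnSeries Function

namespace HahnSeries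

section LowerBounds

theorem le_of_mem_support_of_forall_lt {Γ R : Type*} [LinearOrder Γ] [Zero R] {x : R⟦Γ⟧} {a : Γ}
    (hx : ∀ k < a, x.coeff k = 0) {i : Γ} (hi : i ∈ x.support) : a ≤ i :=
  not_lt.1 fun h => hi (hx i h)

variable {Γ R : Type*} [AddCommMonoid Γ] [LinearOrder Γ] [IsOrderedCancelAddMonoid Γ]
  [NonUnitalNonAssocSemiring R] {x y : R⟦Γ⟧} {a b : Γ}

theorem coeff_mul_eq_zero_of_lt (hx : ∀ k < a, x.coeff k = 0) (hy : ∀ k < b, y.coeff k = 0)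
    {m : Γ} (hm : m < a + b) : (x * y).coeff m = 0 := by
  rw [coeff_mul]
  refine Finset.sum_eq_zero fun ij hij => ?_
  obtain ⟨hi, hj, rfl⟩ := Finset.mem_antidiagonal.1 hij
  exact absurd hm (not_lt.2 (add_le_add (le_of_mem_support_of_forall_lt hx hi)
    (le_of_mem_support_of_forall_lt hy hj)))

theorem coeff_mul_add_of_forall_lt (hx : ∀ k < a, x.coeff k = 0) (hy : ∀ k < b, y.coeff k = 0) :
    (x * y).coeff (a + b) = x.coeff a * y.coeff b := by
  rw [coeff_mul, Finset.sum_eq_single (a, b)]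
  · rintro ⟨i, j⟩ hij hne
    obtain ⟨hi, hj, hsum⟩ := Finset.mem_antidiagonal.1 hij
    obtain ⟨rfl, rfl⟩ := (add_eq_add_iff_eq_and_eq (le_of_mem_support_of_forall_lt hx hi)
      (le_of_mem_support_of_forall_lt hy hj)).1 hsum.symm
    exact absurd rfl hne
  · intro hab
    by_contra h
    exact hab (Finset.mem_antidiagonal.2 ⟨left_ne_zero_of_mul h, right_ne_zero_of_mul h, rfl⟩)

end LowerBounds

end HahnSeries

/-- The Euler operator `t d/dt`. -/
noncomputable def eulerOp {R : Type*} [Ring R] (f : LaurentSeries R) : LaurentSeries R where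
  coeff m := (m : R) * f.coeff m
  isPWO_support' := f.isPWO_support.mono fun _ hm => right_ne_zero_of_mul hm

theorem eulerOp_mul {R : Type*} [CommRing R] (f g : LaurentSeries R) :
    eulerOp (f * g) = eulerOp f * g + f * eulerOp g := by
  ext m
  have hf : (eulerOp f).support ⊆ f.support := fun _ hm => right_ne_zero_of_mul hm
  have hg : (eulerOp g).support ⊆ g.support := fun _ hm => right_ne_zero_of_mul hm
  rw [coeff_add, coeff_mul_left' f.isPWO_support hf, coeff_mul_right' g.isPWO_support hg,
    ← Finset.sum_add_distrib]
  show (m : R) * (f * g).coeff m = _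
  rw [coeff_mul, Finset.mul_sum]
  refine Finset.sum_congr rfl fun ij hij => ?_
  obtain ⟨-, -, hsum⟩ := Finset.mem_antidiagonal.1 hij
  show (m : R) * (f.coeff ij.1 * g.coeff ij.2) =
    ((ij.1 : R) * f.coeff ij.1) * g.coeff ij.2 + f.coeff ij.1 * ((ij.2 : R) * g.coeff ij.2)
  rw [← hsum, Int.cast_add]
  ring

theorem lderiv_eq_single_mul_eulerOp (f : LaurentSeries ℂ) :
    lderiv f = single (-1) 1 * eulerOp f := by
  ext m
  have h := coeff_single_mul_add (r := (1 : ℂ)) (x := eulerOp f) (a := m + 1) (b := -1)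
  rw [add_neg_cancel_right, one_mul] at h
  rw [h]
  rfl

theorem lderiv_mul (f g : LaurentSeries ℂ) : lderiv (f * g) = lderiv f * g + f * lderiv g := by
  simp only [lderiv_eq_single_mul_eulerOp, eulerOp_mul]
  ring

theorem lderiv_add (f g : LaurentSeries ℂ) : lderiv (f + g) = lderiv f + lderiv g := by
  ext m
  simp [lderiv, mul_add]

theorem lderiv_sum {ι : Type*} (s : Finset ι) (f : ι → LaurentSeries ℂ) :
    lderiv (∑ i ∈ s, f i) = ∑ i ∈ s, lderiv (f i) :=
  map_sum (AddMonoidHom.mk' lderiv lderiv_add) f s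

theorem mderiv_mul {N : ℕ} (P X : Matrix (Fin N) (Fin N) (LaurentSeries ℂ)) :
    mderiv (P * X) = mderiv P * X + P * mderiv X := by
  ext i j
  simp only [mderiv, Matrix.map_apply, Matrix.mul_apply, Matrix.add_apply, lderiv_sum,
    lderiv_mul, Finset.sum_add_distrib]

section GaugeOperator

variable {N : ℕ}

noncomputable def covDeriv (A X : Matrix (Fin N) (Fin N) (LaurentSeries ℂ)) :
    Matrix (Fin N) (Fin N) (LaurentSeries ℂ) :=
  mderiv X + A * X

theorem semiconj_covDeriv_of_gauge {A A' g : Matrix (Fin N) (Fin N) (LaurentSeries ℂ)}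
    (h : A' * g = g * A - mderiv g) : Semiconj (g * ·) (covDeriv A) (covDeriv A') := fun X => by
  simp only [covDeriv, mderiv_mul, ← mul_assoc, h, sub_mul, mul_add]
  abel

def VanishesBelow (X : Matrix (Fin N) (Fin N) (LaurentSeries ℂ)) (v : ℤ) : Prop :=
  ∀ m < v, mcoeff X m = 0

theorem exists_vanishesBelow (X : Matrix (Fin N) (Fin N) (LaurentSeries ℂ)) :
    ∃ v, VanishesBelow X v := by
  obtain ⟨v, hv⟩ := (Set.finite_range fun p : Fin N × Fin N => (X p.1 p.2).order).bddBelow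
  exact ⟨v, fun m hm => Matrix.ext fun i j =>
    coeff_eq_zero_of_lt_order (hm.trans_le (hv ⟨(i, j), rfl⟩))⟩

theorem mcoeff_add (X Y : Matrix (Fin N) (Fin N) (LaurentSeries ℂ)) (m : ℤ) :
    mcoeff (X + Y) m = mcoeff X m + mcoeff Y m :=
  rfl

theorem mcoeff_one (m : ℤ) :
    mcoeff (1 : Matrix (Fin N) (Fin N) (LaurentSeries ℂ)) m = if m = 0 then 1 else 0 := by
  ext i j
  by_cases hij : i = j <;> by_cases hm : m = 0 <;> simp [mcoeff, Matrix.one_apply, hij, hm]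

theorem vanishesBelow_one : VanishesBelow (1 : Matrix (Fin N) (Fin N) (LaurentSeries ℂ)) 0 :=
  fun m hm => by rw [mcoeff_one, if_neg hm.ne]

variable {A X Y : Matrix (Fin N) (Fin N) (LaurentSeries ℂ)} {a b n v : ℤ}

theorem VanishesBelow.coeff_eq_zero (hX : VanishesBelow X v) (i j : Fin N) :
    ∀ m < v, (X i j).coeff m = 0 :=
  fun m hm => congr_fun₂ (hX m hm) i j

theorem VanishesBelow.mul (hX : VanishesBelow X a) (hY : VanishesBelow Y b) :
    VanishesBelow (X * Y) (a + b) := fun m hm => by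
  ext i j
  simp only [mcoeff, Matrix.of_apply, Matrix.mul_apply, coeff_sum, Matrix.zero_apply]
  exact Finset.sum_eq_zero fun k _ =>
    coeff_mul_eq_zero_of_lt (hX.coeff_eq_zero i k) (hY.coeff_eq_zero k j) hm

theorem mcoeff_mul_add (hX : VanishesBelow X a) (hY : VanishesBelow Y b) :
    mcoeff (X * Y) (a + b) = mcoeff X a * mcoeff Y b := by
  ext i j
  simp only [mcoeff, Matrix.of_apply, Matrix.mul_apply, coeff_sum]
  exact Finset.sum_congr rfl fun k _ =>
    coeff_mul_add_of_forall_lt (hX.coeff_eq_zero i k) (hY.coeff_eq_zero k j)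

theorem vanishesBelow_mderiv (hX : VanishesBelow X v) : VanishesBelow (mderiv X) (v - 1) :=
  fun m hm => Matrix.ext fun i j => by
    show ((m + 1 : ℤ) : ℂ) * (X i j).coeff (m + 1) = 0
    rw [hX.coeff_eq_zero i j (m + 1) (by omega), mul_zero]

theorem vanishesBelow_covDeriv (hn : 1 ≤ n) (hA : VanishesBelow A (-n)) (hX : VanishesBelow X v) :
    VanishesBelow (covDeriv A X) (-n + v) := fun m hm => by
  rw [covDeriv, mcoeff_add, vanishesBelow_mderiv hX m (by omega), (hA.mul hX) m hm, add_zero]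

theorem mcoeff_covDeriv (hn : 2 ≤ n) (hA : VanishesBelow A (-n)) (hX : VanishesBelow X v) :
    mcoeff (covDeriv A X) (-n + v) = mcoeff A (-n) * mcoeff X v := by
  rw [covDeriv, mcoeff_add, vanishesBelow_mderiv hX _ (by omega), mcoeff_mul_add hA hX, zero_add]

theorem vanishesBelow_iterate_covDeriv (hn : 1 ≤ n) (hA : VanishesBelow A (-n))
    (hX : VanishesBelow X v) (k : ℕ) : VanishesBelow ((covDeriv A)^[k] X) (-n * k + v) := by
  induction k with
  | zero => simpa using hX
  | succ k ih =>
    rw [iterate_succ_apply', show -n * ↑(k + 1) + v = -n + (-n * k + v) by push_cast; ring]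
    exact vanishesBelow_covDeriv hn hA ih

theorem mcoeff_iterate_covDeriv (hn : 2 ≤ n) (hA : VanishesBelow A (-n))
    (hX : VanishesBelow X v) (k : ℕ) :
    mcoeff ((covDeriv A)^[k] X) (-n * k + v) = mcoeff A (-n) ^ k * mcoeff X v := by
  induction k with
  | zero => simp
  | succ k ih =>
    rw [iterate_succ_apply', show -n * ↑(k + 1) + v = -n + (-n * k + v) by push_cast; ring,
      mcoeff_covDeriv hn hA (vanishesBelow_iterate_covDeriv (by omega) hA hX k), ih, pow_succ',
      mul_assoc]

end GaugeOperator

theorem le_of_semiconj_covDeriv {N : ℕ} {n n' : ℤ} (hn : 2 ≤ n) (hn' : 1 ≤ n')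
    {A A' P Q : Matrix (Fin N) (Fin N) (LaurentSeries ℂ)} (hA : VanishesBelow A (-n))
    (hA_nilp : ¬ IsNilpotent (mcoeff A (-n))) (hA' : VanishesBelow A' (-n')) (hQP : Q * P = 1)
    (hQ : Semiconj (Q * ·) (covDeriv A') (covDeriv A)) : n ≤ n' := by
  obtain ⟨c, hc⟩ := exists_vanishesBelow Q
  obtain ⟨d, hd⟩ := exists_vanishesBelow P
  have hiter (k : ℕ) : (covDeriv A)^[k] 1 = Q * (covDeriv A')^[k] P := by
    rw [← hQP]
    exact (hQ.iterate_right k P).symm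
  have hlow (k : ℕ) : VanishesBelow ((covDeriv A)^[k] 1) (c + (-n' * k + d)) :=
    hiter k ▸ hc.mul (vanishesBelow_iterate_covDeriv hn' hA' hd k)
  have hlead (k : ℕ) : mcoeff ((covDeriv A)^[k] 1) (-n * k) = mcoeff A (-n) ^ k := by
    simpa [mcoeff_one] using mcoeff_iterate_covDeriv hn hA vanishesBelow_one k
  have hbound (k : ℕ) : c + (-n' * k + d) ≤ -n * k := by
    by_contra h
    exact hA_nilp ⟨k, (hlead k).symm.trans (hlow k _ (not_le.1 h))⟩
  by_contra hlt
  have := hbound ((-(c + d)).toNat + 1)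
  push_cast at this
  nlinarith [Int.self_le_toNat (-(c + d))]

theorem reduced_forms_same_order_general
    (N : ℕ) (n n' : ℤ) (hn : 2 ≤ n) (hn' : 2 ≤ n')
    (A A' : Matrix (Fin N) (Fin N) (LaurentSeries ℂ))
    (hA : ∀ m : ℤ, m < -n → mcoeff A m = 0)
    (hAnonnilp : ¬ IsNilpotent (mcoeff A (-n)))
    (hA' : ∀ m : ℤ, m < -n' → mcoeff A' m = 0)
    (hA'nonnilp : ¬ IsNilpotent (mcoeff A' (-n')))
    (g : Matrix (Fin N) (Fin N) (LaurentSeries ℂ)) (hg : IsUnit g)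
    (hgauge : A' = g * A * g⁻¹ - (mderiv g) * g⁻¹) :
    n = n' := by
  have hdet : IsUnit g.det := (Matrix.isUnit_iff_isUnit_det g).mp hg
  have hgauge' : A' * g = g * A - mderiv g := by
    rw [hgauge, sub_mul, Matrix.nonsing_inv_mul_cancel_right (A := g) _ hdet,
      Matrix.nonsing_inv_mul_cancel_right (A := g) _ hdet]
  have hsemi : Semiconj (g * ·) (covDeriv A) (covDeriv A') := semiconj_covDeriv_of_gauge hgauge'
  have hsemi_inv : Semiconj (g⁻¹ * ·) (covDeriv A') (covDeriv A) :=
    hsemi.inverse_left (fun X => Matrix.nonsing_inv_mul_cancel_left (A := g) X hdet)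
      (fun X => Matrix.mul_nonsing_inv_cancel_left (A := g) X hdet)
  exact le_antisymm
    (le_of_semiconj_covDeriv hn (by omega) hA hAnonnilp hA' (g.nonsing_inv_mul hdet) hsemi_inv)
    (le_of_semiconj_covDeriv hn' (by omega) hA' hA'nonnilp hA (g.mul_nonsing_inv hdet) hsemi)

/-- Two gauge-equivalent operators in reduced form (order of singularity `≥ 2`,
non-nilpotent polar part) have the same order of singularity. This is the key
claim in the proof that the slope of a connection is well defined. -/
theorem reduced_forms_same_order
    (N : ℕ) (hN : 1 ≤ N) (n n' : ℤ) (hn : 2 ≤ n) (hn' : 2 ≤ n')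
    (A A' : Matrix (Fin N) (Fin N) (LaurentSeries ℂ))
    (hA : ∀ m : ℤ, m < -n → mcoeff A m = 0)
    (hAnonnilp : ¬ IsNilpotent (mcoeff A (-n)))
    (hA' : ∀ m : ℤ, m < -n' → mcoeff A' m = 0)
    (hA'nonnilp : ¬ IsNilpotent (mcoeff A' (-n')))
    (g : Matrix (Fin N) (Fin N) (LaurentSeries ℂ)) (hg : IsUnit g)
    (hgauge : A' = g * A * g⁻¹ - (mderiv g) * g⁻¹) :
    n = n' :=
  reduced_forms_same_order_general N n n' hn hn' A A' hA hAnonnilp hA' hA'nonnilp g hg hgauge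
end
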